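/- arXiv:1803.06046 — 2 statements merged into one kernel-verified Lean document; each statement's English description precedes it below -/
import Mathlib

section
/- Let P, P' be two probability measures on a product space ∏_{t=0}^{k} (X × Y × U) constructed sequentially from the same initial distribution, the same observation channel Q, the same (deterministic) policy γ, but with transition kernels Tₙ and T respectively (strategic measures). Then ‖P^γ_{Tₙ}(d(x,y,u)_{[0,k]}) − P^γ_{T}(d(x,y,u)_{[0,k]})‖_TV ≤ k · sup_{x∈X, u∈U} ‖Tₙ(·|x,u) − T(·|x,u)‖_TV. -/
/-!
Both strategic measures satisfy `P^γ_{k+1} = P^γ_k.bind (step_k)`, where the step kernel at a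
history `h` is `T(x_k, u_k).bind K_h` pushed forward along `Fin.snoc h`, and `K_h` (observation
and control) does not involve the transition kernel. Total variation does not increase under
a fixed Markov kernel or a measurable map, so the step kernels for `Tₙ` and `T` are uniformly
`ε := sup ‖Tₙ − T‖_TV`-close. Passing through `P^γ_{T,k}.bind (step_{Tₙ,k})` with the triangle
inequality gives `‖P^γ_{Tₙ,k+1} − P^γ_{T,k+1}‖ ≤ ‖P^γ_{Tₙ,k} − P^γ_{T,k}‖ + ε`, and the two
measures agree at `k = 0`.
-/

open MeasureTheory Filter Topology

/-- Total variation distance: `‖μ − ν‖_TV = 2 · sup_B |μ(B) − ν(B)|`. -/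
noncomputable def tvDist {W : Type*} [MeasurableSpace W] (μ ν : Measure W) : ℝ :=
  2 * ⨆ B : {s : Set W // MeasurableSet s}, |(μ B.1).toReal - (ν B.1).toReal|

/-- The strategic measure on trajectories `(x_t, y_t, u_t)_{t=0}^k` induced by
an initial distribution `P`, observation channel `Q`, deterministic policy `γ`
(a function of the observation history) and transition kernel `T`:
`P(dx₀)Q(dy₀|x₀)1_{γ(y₀)∈du₀} T(dx₁|x₀,u₀)Q(dy₁|x₁)1_{γ(y₀,y₁)∈du₁} ⋯`. -/
noncomputable def strat {X Y U : Type*} [MeasurableSpace X] [MeasurableSpace Y]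
    [MeasurableSpace U]
    (P : Measure X) (Q : X → Measure Y) (γ : (k : ℕ) → (Fin (k + 1) → Y) → U)
    (T : X → U → Measure X) : (k : ℕ) → Measure (Fin (k + 1) → X × Y × U)
  | 0 => P.bind (fun x => (Q x).map (fun y => fun _ => (x, y, γ 0 (fun _ => y))))
  | (k + 1) =>
      (strat P Q γ T k).bind (fun h =>
        ((T (h (Fin.last k)).1 (h (Fin.last k)).2.2).bind (fun x' =>
          (Q x').map (fun y' =>
            (x', y', γ (k + 1) (Fin.snoc (fun i => (h i).2.1) y'))))).map
          (Fin.snoc h))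


open scoped ENNReal
open ProbabilityTheory

section TotalVariation

variable {α β : Type*} [MeasurableSpace α] [MeasurableSpace β]

lemma bddAbove_range_abs_sub_toReal (μ ν : Measure α) [IsFiniteMeasure μ] [IsFiniteMeasure ν] :
    BddAbove (Set.range fun B : {s : Set α // MeasurableSet s} =>
      |(μ B.1).toReal - (ν B.1).toReal|) := by
  refine ⟨μ.real Set.univ + ν.real Set.univ, ?_⟩
  rintro _ ⟨B, rfl⟩
  have hμ : μ.real B.1 ≤ μ.real Set.univ := measureReal_mono (Set.subset_univ _)
  have hν : ν.real B.1 ≤ ν.real Set.univ := measureReal_mono (Set.subset_univ _)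
  have := measureReal_nonneg (μ := μ) (s := B.1)
  have := measureReal_nonneg (μ := ν) (s := B.1)
  rw [abs_sub_le_iff]
  constructor <;> linarith [measureReal_def μ B.1, measureReal_def ν B.1]

lemma two_mul_abs_sub_le_tvDist (μ ν : Measure α) [IsFiniteMeasure μ] [IsFiniteMeasure ν]
    {B : Set α} (hB : MeasurableSet B) :
    2 * |(μ B).toReal - (ν B).toReal| ≤ tvDist μ ν := by
  have := le_ciSup (bddAbove_range_abs_sub_toReal μ ν) ⟨B, hB⟩
  unfold tvDist
  linarith

lemma tvDist_le_of_forall {μ ν : Measure α} {c : ℝ}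
    (h : ∀ B, MeasurableSet B → 2 * |(μ B).toReal - (ν B).toReal| ≤ c) :
    tvDist μ ν ≤ c := by
  have : Nonempty {s : Set α // MeasurableSet s} := ⟨⟨∅, .empty⟩⟩
  have := ciSup_le fun B : {s : Set α // MeasurableSet s} =>
    (le_div_iff₀' two_pos).2 (h B.1 B.2)
  unfold tvDist
  linarith

@[simp]
lemma tvDist_self (μ : Measure α) : tvDist μ μ = 0 := by
  simp [tvDist]

lemma tvDist_le_two (μ ν : Measure α) [IsProbabilityMeasure μ] [IsProbabilityMeasure ν] :
    tvDist μ ν ≤ 2 := by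
  refine tvDist_le_of_forall fun B _ => ?_
  have := abs_sub_le_of_nonneg_of_le measureReal_nonneg (measureReal_le_one (μ := μ) (s := B))
    measureReal_nonneg (measureReal_le_one (μ := ν) (s := B))
  rw [measureReal_def, measureReal_def] at this
  linarith

lemma tvDist_triangle (μ ν ρ : Measure α) [IsFiniteMeasure μ] [IsFiniteMeasure ν]
    [IsFiniteMeasure ρ] : tvDist μ ρ ≤ tvDist μ ν + tvDist ν ρ := by
  refine tvDist_le_of_forall fun B hB => ?_
  have := abs_sub_le (μ B).toReal (ν B).toReal (ρ B).toReal
  linarith [two_mul_abs_sub_le_tvDist μ ν hB, two_mul_abs_sub_le_tvDist ν ρ hB]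

lemma tvDist_map_le (μ ν : Measure α) [IsFiniteMeasure μ] [IsFiniteMeasure ν] {f : α → β}
    (hf : Measurable f) : tvDist (μ.map f) (ν.map f) ≤ tvDist μ ν := by
  refine tvDist_le_of_forall fun B hB => ?_
  rw [Measure.map_apply hf hB, Measure.map_apply hf hB]
  exact two_mul_abs_sub_le_tvDist μ ν (hf hB)

lemma tvDist_comm (μ ν : Measure α) : tvDist μ ν = tvDist ν μ := by
  simp only [tvDist, abs_sub_comm]

lemma toReal_lintegral_le_add_tvDist (μ ν : Measure α) [IsFiniteMeasure μ] [IsFiniteMeasure ν]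
    {f : α → ℝ≥0∞} (hf : ∀ a, f a ≤ 1) :
    (∫⁻ a, f a ∂μ).toReal ≤ (∫⁻ a, f a ∂ν).toReal + tvDist μ ν / 2 := by
  obtain ⟨S, hS, hνμ, hμν⟩ := hahn_decomposition (μ := μ) (ν := ν)
  have hle : ν.restrict S ≤ μ.restrict S := Measure.le_iff.2 fun t ht => by
    simpa only [Measure.restrict_apply ht] using hνμ _ (ht.inter hS) Set.inter_subset_right
  have hle' : μ.restrict Sᶜ ≤ ν.restrict Sᶜ := Measure.le_iff.2 fun t ht => by
    simpa only [Measure.restrict_apply ht] using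
      hμν _ (ht.inter hS.compl) Set.inter_subset_right
  have hlint_le : ∀ ρ : Measure α, ∫⁻ a, f a ∂ρ ≤ ρ Set.univ := fun ρ =>
    (lintegral_mono hf).trans_eq (by simp)
  -- On the Hahn set `S`, where `ν ≤ μ`, the excess is at most `(μ - ν) S` because `f ≤ 1`.
  have hS_le : ∫⁻ a in S, f a ∂μ ≤ ∫⁻ a in S, f a ∂ν + (μ S - ν S) := by
    calc ∫⁻ a in S, f a ∂μ
        = ∫⁻ a, f a ∂(μ.restrict S - ν.restrict S) + ∫⁻ a in S, f a ∂ν := by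
          rw [← lintegral_add_measure, Measure.sub_add_cancel_of_le hle]
      _ ≤ (μ.restrict S - ν.restrict S) Set.univ + ∫⁻ a in S, f a ∂ν := by
          gcongr; exact hlint_le _
      _ = ∫⁻ a in S, f a ∂ν + (μ S - ν S) := by
          rw [Measure.sub_apply .univ hle, Measure.restrict_apply_univ,
            Measure.restrict_apply_univ, add_comm]
  have hSc_le : ∫⁻ a in Sᶜ, f a ∂μ ≤ ∫⁻ a in Sᶜ, f a ∂ν := lintegral_mono' hle' le_rfl
  have hle_add : ∫⁻ a, f a ∂μ ≤ ∫⁻ a, f a ∂ν + (μ S - ν S) := by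
    rw [← lintegral_add_compl f hS (μ := μ), ← lintegral_add_compl f hS (μ := ν)]
    calc _ ≤ (∫⁻ a in S, f a ∂ν + (μ S - ν S)) + ∫⁻ a in Sᶜ, f a ∂ν := add_le_add hS_le hSc_le
      _ = _ := by ring
  have hν_ne_top : ∫⁻ a, f a ∂ν ≠ ∞ := ne_top_of_le_ne_top (measure_ne_top ν _) (hlint_le ν)
  have hsub_ne_top : μ S - ν S ≠ ∞ := ne_top_of_le_ne_top (measure_ne_top μ S) tsub_le_self
  have hsub_le : (μ S - ν S).toReal ≤ tvDist μ ν / 2 := by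
    have := two_mul_abs_sub_le_tvDist μ ν hS
    rcases le_total (ν S) (μ S) with h | h
    · rw [ENNReal.toReal_sub_of_le h (measure_ne_top μ S)]
      linarith [le_abs_self ((μ S).toReal - (ν S).toReal)]
    · rw [tsub_eq_zero_of_le h, ENNReal.toReal_zero]
      linarith [abs_nonneg ((μ S).toReal - (ν S).toReal)]
  calc (∫⁻ a, f a ∂μ).toReal ≤ (∫⁻ a, f a ∂ν + (μ S - ν S)).toReal :=
        ENNReal.toReal_mono (ENNReal.add_ne_top.2 ⟨hν_ne_top, hsub_ne_top⟩) hle_add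
    _ = (∫⁻ a, f a ∂ν).toReal + (μ S - ν S).toReal := ENNReal.toReal_add hν_ne_top hsub_ne_top
    _ ≤ _ := by gcongr

lemma two_mul_abs_toReal_lintegral_sub_le_tvDist (μ ν : Measure α) [IsFiniteMeasure μ]
    [IsFiniteMeasure ν] {f : α → ℝ≥0∞} (hf : ∀ a, f a ≤ 1) :
    2 * |(∫⁻ a, f a ∂μ).toReal - (∫⁻ a, f a ∂ν).toReal| ≤ tvDist μ ν := by
  have := toReal_lintegral_le_add_tvDist μ ν hf
  have := toReal_lintegral_le_add_tvDist ν μ hf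
  have : |(∫⁻ a, f a ∂μ).toReal - (∫⁻ a, f a ∂ν).toReal| ≤ tvDist μ ν / 2 :=
    abs_sub_le_iff.2 ⟨by linarith, by linarith [tvDist_comm μ ν]⟩
  linarith

lemma tvDist_bind_le (μ ν : Measure α) [IsFiniteMeasure μ] [IsFiniteMeasure ν]
    {κ : α → Measure β} (hκ : Measurable κ) [∀ a, IsProbabilityMeasure (κ a)] :
    tvDist (μ.bind κ) (ν.bind κ) ≤ tvDist μ ν := by
  refine tvDist_le_of_forall fun B hB => ?_
  rw [Measure.bind_apply hB hκ.aemeasurable, Measure.bind_apply hB hκ.aemeasurable]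
  exact two_mul_abs_toReal_lintegral_sub_le_tvDist μ ν fun a => prob_le_one

lemma abs_toReal_lintegral_sub_le (ν : Measure α) [IsProbabilityMeasure ν] {f g : α → ℝ≥0∞}
    (hf : Measurable f) (hg : Measurable g) (hf1 : ∀ a, f a ≤ 1) (hg1 : ∀ a, g a ≤ 1) {c : ℝ}
    (h : ∀ a, |(f a).toReal - (g a).toReal| ≤ c) :
    |(∫⁻ a, f a ∂ν).toReal - (∫⁻ a, g a ∂ν).toReal| ≤ c := by
  have hfin : ∀ φ : α → ℝ≥0∞, (∀ a, φ a ≤ 1) → ∀ a, φ a < ∞ :=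
    fun φ hφ a => (hφ a).trans_lt ENNReal.one_lt_top
  have hint : ∀ φ : α → ℝ≥0∞, Measurable φ → (∀ a, φ a ≤ 1) →
      Integrable (fun a => (φ a).toReal) ν := fun φ hφ hφ1 =>
    integrable_toReal_of_lintegral_ne_top hφ.aemeasurable (ne_top_of_le_ne_top ENNReal.one_ne_top
      ((lintegral_mono hφ1).trans_eq (by simp)))
  rw [← integral_toReal hf.aemeasurable (.of_forall (hfin f hf1)),
    ← integral_toReal hg.aemeasurable (.of_forall (hfin g hg1)),
    ← integral_sub (hint f hf hf1) (hint g hg hg1)]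
  simpa using norm_integral_le_of_norm_le_const (μ := ν)
    (f := fun a => (f a).toReal - (g a).toReal) (.of_forall h)

lemma tvDist_bind_le_of_le (ν : Measure α) [IsProbabilityMeasure ν] {κ η : α → Measure β}
    (hκ : Measurable κ) (hη : Measurable η) [∀ a, IsProbabilityMeasure (κ a)]
    [∀ a, IsProbabilityMeasure (η a)] {c : ℝ} (h : ∀ a, tvDist (κ a) (η a) ≤ c) :
    tvDist (ν.bind κ) (ν.bind η) ≤ c := by
  refine tvDist_le_of_forall fun B hB => ?_
  rw [Measure.bind_apply hB hκ.aemeasurable, Measure.bind_apply hB hη.aemeasurable]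
  have := abs_toReal_lintegral_sub_le ν (f := fun a => κ a B) (g := fun a => η a B)
    ((Measure.measurable_coe hB).comp hκ)
    ((Measure.measurable_coe hB).comp hη) (fun _ => prob_le_one) (fun _ => prob_le_one)
    (c := c / 2) fun a => by linarith [two_mul_abs_sub_le_tvDist (κ a) (η a) hB, h a]
  linarith

lemma tvDist_bind_le_add (μ ν : Measure α) [IsProbabilityMeasure μ] [IsProbabilityMeasure ν]
    {κ η : α → Measure β} (hκ : Measurable κ) (hη : Measurable η)
    [∀ a, IsProbabilityMeasure (κ a)] [∀ a, IsProbabilityMeasure (η a)] {c : ℝ}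
    (h : ∀ a, tvDist (κ a) (η a) ≤ c) :
    tvDist (μ.bind κ) (ν.bind η) ≤ tvDist μ ν + c := by
  have := isProbabilityMeasure_bind (m := μ) hκ.aemeasurable (.of_forall fun _ => inferInstance)
  have := isProbabilityMeasure_bind (m := ν) hκ.aemeasurable (.of_forall fun _ => inferInstance)
  have := isProbabilityMeasure_bind (m := ν) hη.aemeasurable (.of_forall fun _ => inferInstance)
  calc _ ≤ tvDist (μ.bind κ) (ν.bind κ) + tvDist (ν.bind κ) (ν.bind η) := tvDist_triangle _ _ _
    _ ≤ _ := add_le_add (tvDist_bind_le μ ν hκ) (tvDist_bind_le_of_le ν hκ hη h)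

end TotalVariation

section KernelMeasurability

variable {α β γ : Type*} [MeasurableSpace α] [MeasurableSpace β] [MeasurableSpace γ]

lemma ProbabilityTheory.Kernel.measurable_map_prodMk (κ : Kernel α β) [IsSFiniteKernel κ] :
    Measurable fun a => (κ a).map (Prod.mk a) := by
  refine Measure.measurable_of_measurable_coe _ fun s hs => ?_
  simp_rw [Measure.map_apply measurable_prodMk_left hs]
  exact Kernel.measurable_kernel_prodMk_left hs

lemma ProbabilityTheory.Kernel.measurable_map_of_uncurry (κ : Kernel α β) [IsSFiniteKernel κ]
    {f : α → β → γ} (hf : Measurable (Function.uncurry f)) :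
    Measurable fun a => (κ a).map (f a) := by
  have : ∀ a, (κ a).map (f a) = ((κ a).map (Prod.mk a)).map (Function.uncurry f) := fun a => by
    rw [Measure.map_map hf measurable_prodMk_left]; rfl
  simp_rw [this]
  exact (Measure.measurable_map _ hf).comp κ.measurable_map_prodMk

lemma ProbabilityTheory.Kernel.measurable_bind_of_uncurry (κ : Kernel α β) [IsSFiniteKernel κ]
    {η : α → β → Measure γ} (hη : Measurable (Function.uncurry η)) :
    Measurable fun a => (κ a).bind (η a) := by
  have : ∀ a, (κ a).bind (η a) = ((κ a).map (Prod.mk a)).bind (Function.uncurry η) := fun a => by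
    rw [Measure.bind, Measure.bind, Measure.map_map hη measurable_prodMk_left]; rfl
  simp_rw [this]
  exact (Measure.measurable_bind' hη).comp κ.measurable_map_prodMk

end KernelMeasurability

@[fun_prop]
lemma Measurable.finSnoc {α β : Type*} [MeasurableSpace α] [MeasurableSpace β] {n : ℕ}
    {f : β → Fin n → α} {g : β → α} (hf : Measurable f) (hg : Measurable g) :
    Measurable fun b => (Fin.snoc (f b) (g b) : Fin (n + 1) → α) := by
  refine measurable_pi_lambda _ fun i => Fin.lastCases ?_ (fun j => ?_) i
  · simpa only [Fin.snoc_last] using hg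
  · simpa only [Fin.snoc_castSucc] using hf.eval

section StrategicMeasure

variable {X Y U : Type*} [MeasurableSpace X] [MeasurableSpace Y] [MeasurableSpace U]

/-- Law of `(x_{k+1}, y_{k+1}, u_{k+1})` given the history `h` up to time `k` and `x_{k+1} = x'`. -/
noncomputable def stratObs (Q : X → Measure Y) (γ : (k : ℕ) → (Fin (k + 1) → Y) → U) (k : ℕ)
    (h : Fin (k + 1) → X × Y × U) (x' : X) : Measure (X × Y × U) :=
  (Q x').map fun y' => (x', y', γ (k + 1) (Fin.snoc (fun i => (h i).2.1) y'))

noncomputable def stratStep (Q : X → Measure Y) (γ : (k : ℕ) → (Fin (k + 1) → Y) → U)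
    (T : X → U → Measure X) (k : ℕ) (h : Fin (k + 1) → X × Y × U) :
    Measure (Fin (k + 2) → X × Y × U) :=
  ((T (h (Fin.last k)).1 (h (Fin.last k)).2.2).bind (stratObs Q γ k h)).map (Fin.snoc h)

lemma strat_succ (P : Measure X) (Q : X → Measure Y) (γ : (k : ℕ) → (Fin (k + 1) → Y) → U)
    (T : X → U → Measure X) (k : ℕ) :
    strat P Q γ T (k + 1) = (strat P Q γ T k).bind (stratStep Q γ T k) := rfl

variable {P : Measure X} {Q : X → Measure Y} {γ : (k : ℕ) → (Fin (k + 1) → Y) → U}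
  {Tn T : X → U → Measure X} [∀ x, IsProbabilityMeasure (Q x)]
  [∀ x u, IsProbabilityMeasure (Tn x u)] [∀ x u, IsProbabilityMeasure (T x u)]

lemma measurable_stratObs (hQ : Measurable Q) (hγ : ∀ k, Measurable (γ k)) (k : ℕ) :
    Measurable (Function.uncurry (stratObs Q γ k)) := by
  have : IsMarkovKernel (⟨Q, hQ⟩ : Kernel X Y) := ⟨inferInstance⟩
  exact (Kernel.prodMkLeft (Fin (k + 1) → X × Y × U) ⟨Q, hQ⟩).measurable_map_of_uncurry
    (f := fun p y' => (p.2, y', γ (k + 1) (Fin.snoc (fun i => (p.1 i).2.1) y')))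
    (by have := hγ (k + 1); fun_prop)

lemma isProbabilityMeasure_stratObs (hγ : ∀ k, Measurable (γ k)) (k : ℕ)
    (h : Fin (k + 1) → X × Y × U) (x' : X) : IsProbabilityMeasure (stratObs Q γ k h x') :=
  Measure.isProbabilityMeasure_map (by have := hγ (k + 1); fun_prop)

lemma isProbabilityMeasure_bind_stratObs (hQ : Measurable Q) (hγ : ∀ k, Measurable (γ k))
    (k : ℕ) (h : Fin (k + 1) → X × Y × U) (μ : Measure X) [IsProbabilityMeasure μ] :
    IsProbabilityMeasure (μ.bind (stratObs Q γ k h)) :=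
  isProbabilityMeasure_bind (measurable_stratObs hQ hγ k).of_uncurry_left.aemeasurable
    (.of_forall (isProbabilityMeasure_stratObs hγ k h))

lemma isProbabilityMeasure_stratStep (hQ : Measurable Q) (hγ : ∀ k, Measurable (γ k)) (k : ℕ)
    (h : Fin (k + 1) → X × Y × U) : IsProbabilityMeasure (stratStep Q γ T k h) :=
  have := isProbabilityMeasure_bind_stratObs hQ hγ k h (T (h (Fin.last k)).1 (h (Fin.last k)).2.2)
  Measure.isProbabilityMeasure_map (by fun_prop)

lemma measurable_stratStep (hQ : Measurable Q) (hγ : ∀ k, Measurable (γ k))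
    (hT : Measurable (fun p : X × U => T p.1 p.2)) (k : ℕ) :
    Measurable (stratStep Q γ T k) := by
  have : IsMarkovKernel (⟨_, hT⟩ : Kernel (X × U) X) := ⟨fun _ => inferInstance⟩
  let κ := Kernel.comap ⟨_, hT⟩ (fun h : Fin (k + 1) → X × Y × U =>
    ((h (Fin.last k)).1, (h (Fin.last k)).2.2)) (by fun_prop)
  have hbind := κ.measurable_bind_of_uncurry (measurable_stratObs hQ hγ k)
  have : IsMarkovKernel (⟨_, hbind⟩ : Kernel _ (X × Y × U)) :=
    ⟨fun h => isProbabilityMeasure_bind_stratObs hQ hγ k h _⟩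
  exact Kernel.measurable_map_of_uncurry ⟨_, hbind⟩
    (f := fun h (z : X × Y × U) => (Fin.snoc h z : Fin (k + 2) → X × Y × U)) (by fun_prop)

lemma isProbabilityMeasure_strat [IsProbabilityMeasure P] (hQ : Measurable Q)
    (hγ : ∀ k, Measurable (γ k)) (hT : Measurable (fun p : X × U => T p.1 p.2)) :
    ∀ k, IsProbabilityMeasure (strat P Q γ T k)
  | 0 => by
    have : IsMarkovKernel (⟨Q, hQ⟩ : Kernel X Y) := ⟨inferInstance⟩
    have hγ₀ := hγ 0
    exact isProbabilityMeasure_bind (Kernel.measurable_map_of_uncurry ⟨Q, hQ⟩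
      (f := fun x y (_ : Fin 1) => (x, y, γ 0 fun _ => y))
      (measurable_pi_lambda _ fun _ => by fun_prop)).aemeasurable
      (.of_forall fun _ => Measure.isProbabilityMeasure_map
        (measurable_pi_lambda _ fun _ => by fun_prop).aemeasurable)
  | k + 1 =>
    have := isProbabilityMeasure_strat hQ hγ hT k
    isProbabilityMeasure_bind (measurable_stratStep hQ hγ hT k).aemeasurable
      (.of_forall (isProbabilityMeasure_stratStep hQ hγ k))

lemma tvDist_stratStep_le (hQ : Measurable Q) (hγ : ∀ k, Measurable (γ k)) {c : ℝ}
    (hc : ∀ x u, tvDist (Tn x u) (T x u) ≤ c) (k : ℕ) (h : Fin (k + 1) → X × Y × U) :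
    tvDist (stratStep Q γ Tn k h) (stratStep Q γ T k h) ≤ c := by
  have := isProbabilityMeasure_stratObs (Q := Q) hγ k h
  have := isProbabilityMeasure_bind_stratObs (Q := Q) hQ hγ k h
  exact (tvDist_map_le _ _ (by fun_prop)).trans
    ((tvDist_bind_le _ _ (measurable_stratObs hQ hγ k).of_uncurry_left).trans (hc _ _))

lemma tvDist_strat_le [IsProbabilityMeasure P] (hQ : Measurable Q) (hγ : ∀ k, Measurable (γ k))
    (hTn : Measurable (fun p : X × U => Tn p.1 p.2))
    (hT : Measurable (fun p : X × U => T p.1 p.2)) {c : ℝ}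
    (hc : ∀ x u, tvDist (Tn x u) (T x u) ≤ c) :
    ∀ k : ℕ, tvDist (strat P Q γ Tn k) (strat P Q γ T k) ≤ k * c
  | 0 => by simp [show strat P Q γ Tn 0 = strat P Q γ T 0 from rfl]
  | k + 1 => by
    have := isProbabilityMeasure_strat (P := P) hQ hγ hTn k
    have := isProbabilityMeasure_strat (P := P) hQ hγ hT k
    have := isProbabilityMeasure_stratStep (T := Tn) hQ hγ k
    have := isProbabilityMeasure_stratStep (T := T) hQ hγ k
    rw [strat_succ, strat_succ, Nat.cast_succ, add_one_mul]
    exact (tvDist_bind_le_add _ _ (measurable_stratStep hQ hγ hTn k)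
      (measurable_stratStep hQ hγ hT k) (tvDist_stratStep_le hQ hγ hc k)).trans
      (by gcongr; exact tvDist_strat_le hQ hγ hTn hT hc k)

end StrategicMeasure

/-- two strategic measures built from the same initial
distribution `P`, the same channel `Q` and the same policy `γ`, but with
transition kernels `Tₙ` and `T` respectively, satisfy
`‖P^γ_{Tₙ} − P^γ_{T}‖_TV ≤ k · sup_{x,u} ‖Tₙ(·|x,u) − T(·|x,u)‖_TV`. -/
theorem stmt8 {X Y U : Type*} [MeasurableSpace X] [MeasurableSpace Y]
    [MeasurableSpace U]
    (P : Measure X) [IsProbabilityMeasure P]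
    (Q : X → Measure Y) (hQmeas : Measurable Q)
    (hQprob : ∀ x, IsProbabilityMeasure (Q x))
    (γ : (k : ℕ) → (Fin (k + 1) → Y) → U) (hγ : ∀ k, Measurable (γ k))
    (Tn T : X → U → Measure X)
    (hTnmeas : Measurable (fun p : X × U => Tn p.1 p.2))
    (hTmeas : Measurable (fun p : X × U => T p.1 p.2))
    (hTnprob : ∀ x u, IsProbabilityMeasure (Tn x u))
    (hTprob : ∀ x u, IsProbabilityMeasure (T x u)) :
    ∀ k : ℕ, tvDist (strat P Q γ Tn k) (strat P Q γ T k) ≤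
      (k : ℝ) * ⨆ p : X × U, tvDist (Tn p.1 p.2) (T p.1 p.2) := by
  have hbdd : BddAbove (Set.range fun p : X × U => tvDist (Tn p.1 p.2) (T p.1 p.2)) :=
    ⟨2, by rintro _ ⟨p, rfl⟩; exact tvDist_le_two _ _⟩
  exact tvDist_strat_le hQmeas hγ hTnmeas hTmeas fun x u => le_ciSup hbdd (x, u)
end

section
/- (Uniform tightness from precompactness of kernels) Let S be a family of probability measures on a Polish space X such that every sequence in S has a subsequence converging weakly to some probability measure on X (S is weakly precompact). Then S is tight: for every ε > 0 there exists a compact set K ⊆ X with μ(K) ≥ 1 − ε for all μ ∈ S. -/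
open MeasureTheory Filter Topology

/-!
The topology of weak convergence on probability measures on a separable metric space is
metrizable (by the Lévy–Prokhorov metric), so sequential precompactness of `S` makes its closure
compact. On a Polish space a set of probability measures with compact closure is tight.
-/

theorem isCompact_closure_of_forall_exists_tendsto_subseq {X : Type*} [TopologicalSpace X]
    [TopologicalSpace.PseudoMetrizableSpace X] {s : Set X}
    (hs : ∀ u : ℕ → X, (∀ n, u n ∈ s) →
      ∃ (a : X) (φ : ℕ → ℕ), StrictMono φ ∧ Tendsto (u ∘ φ) atTop (𝓝 a)) :
    IsCompact (closure s) := by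
  let := TopologicalSpace.pseudoMetrizableSpacePseudoMetric X
  refine isCompact_iff_isSeqCompact.mpr fun y hy => ?_
  have hclose : ∀ n, ∃ x ∈ s, dist (y n) x < 1 / ((n : ℝ) + 1) := fun n =>
    Metric.mem_closure_iff.mp (hy n) _ Nat.one_div_pos_of_nat
  choose x hxs hxy using hclose
  obtain ⟨a, φ, hφ, hxa⟩ := hs x hxs
  have hdist : Tendsto (fun n => dist (x n) (y n)) atTop (𝓝 0) :=
    squeeze_zero (fun _ => dist_nonneg)
      (fun n => (dist_comm (x n) (y n)).trans_le (hxy n).le)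
      tendsto_one_div_add_atTop_nhds_zero_nat
  exact ⟨a, mem_closure_of_tendsto hxa (.of_forall fun n => hxs (φ n)),
    φ, hφ, hxa.congr_dist (hdist.comp hφ.tendsto_atTop)⟩

theorem one_sub_le_measureReal_of_measure_compl_le {α : Type*} [MeasurableSpace α]
    {μ : Measure α} [IsProbabilityMeasure μ] {s : Set α} (hs : MeasurableSet s) {ε : ℝ}
    (hε : 0 ≤ ε) (h : μ sᶜ ≤ ENNReal.ofReal ε) : 1 - ε ≤ μ.real s := by
  have := ENNReal.toReal_le_of_le_ofReal hε h
  rw [← measureReal_def, probReal_compl_eq_one_sub hs] at this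
  linarith

/-- uniform tightness from weak precompactness, one direction of
Prokhorov's theorem on a Polish space: if every sequence in a family `S` of
probability measures on a Polish space has a subsequence converging weakly to
some probability measure, then `S` is tight: for every `ε > 0` there is a
compact `K` with `μ(K) ≥ 1 − ε` for all `μ ∈ S`. -/
theorem stmt19 {X : Type*} [MetricSpace X] [CompleteSpace X]
    [SecondCountableTopology X] [MeasurableSpace X] [BorelSpace X]
    (S : Set (ProbabilityMeasure X))
    (hprecompact : ∀ μs : ℕ → ProbabilityMeasure X, (∀ n, μs n ∈ S) →
      ∃ (ν : ProbabilityMeasure X) (φ : ℕ → ℕ), StrictMono φ ∧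
        Tendsto (fun n => μs (φ n)) atTop (𝓝 ν)) :
    ∀ ε : ℝ, 0 < ε → ∃ K : Set X, IsCompact K ∧
      ∀ μ ∈ S, 1 - ε ≤ ((μ : Measure X) K).toReal := by
  intro ε hε
  have htight := isTightMeasureSet_of_isCompact_closure
    (isCompact_closure_of_forall_exists_tendsto_subseq hprecompact)
  obtain ⟨K, hK, hKμ⟩ :=
    isTightMeasureSet_iff_exists_isCompact_measure_compl_le.mp htight _ (ENNReal.ofReal_pos.mpr hε)
  exact ⟨K, hK, fun μ hμ => one_sub_le_measureReal_of_measure_compl_le hK.measurableSet hε.le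
    (hKμ _ ⟨μ, hμ, rfl⟩)⟩
end
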